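/- Let K be an algebraically closed field with char K ≠ 2, and let ε ∈ K satisfy ε² = −1. Let Γ = K⟨α,β⟩/(α², β², αβ − βα) be the quotient of the free algebra on two generators by the ideal generated by α², β², and αβ−βα, and let Λ = K⟨a,b⟩/(ab, ba, a² − b²). Then the map α ↦ a + εb, β ↦ a − εb extends to a K-algebra isomorphism Γ ≅ Λ. -/

import Mathlib

open FreeAlgebra

/-- Relations of `Γ(1,1;1) = K⟨α,β⟩/(α², β², αβ - βα)`. -/
def gammaRel (K : Type*) [Field K] : FreeAlgebra K (Fin 2) → FreeAlgebra K (Fin 2) → Prop :=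
  fun x y =>
    (x = ι K 0 * ι K 0 ∧ y = 0) ∨ (x = ι K 1 * ι K 1 ∧ y = 0) ∨
    (x = ι K 0 * ι K 1 ∧ y = ι K 1 * ι K 0)

/-- Relations of `Λ(1,1;2,2) = K⟨a,b⟩/(ab, ba, a² - b²)`. -/
def lambdaRel (K : Type*) [Field K] : FreeAlgebra K (Fin 2) → FreeAlgebra K (Fin 2) → Prop :=
  fun x y =>
    (x = ι K 0 * ι K 1 ∧ y = 0) ∨ (x = ι K 1 * ι K 0 ∧ y = 0) ∨
    (x = ι K 0 * ι K 0 ∧ y = ι K 1 * ι K 1)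

/-!
In any algebra, if `a b` satisfy `ab = ba = 0` then `(a + c b)(a + d b) = a² + cd b²`, so for
`ε² = -1` and `a² = b²` the elements `a ± ε b` square to zero and commute: they satisfy the
relations of `Γ`. Dually, if `α² = β² = 0` and `αβ = βα` then
`(cα + dβ)(c'α + d'β) = (cd' + dc') αβ`, so `(α + β)/2` and `(α - β)/(2ε)` satisfy the relations
of `Λ`. The two resulting algebra maps are mutually inverse on generators.
-/

namespace RingQuot

variable {R X A : Type*} [CommSemiring R] [Semiring A] [Algebra R A]
  {s : FreeAlgebra R X → FreeAlgebra R X → Prop}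

theorem algHom_ext_freeAlgebra {f g : RingQuot s →ₐ[R] A}
    (h : ∀ i, f (mkAlgHom R s (ι R i)) = g (mkAlgHom R s (ι R i))) : f = g :=
  ringQuot_ext' R f g (FreeAlgebra.hom_ext (funext h))

def liftFreeAlgebra (v : X → A)
    (h : ∀ ⦃x y⦄, s x y → FreeAlgebra.lift R v x = FreeAlgebra.lift R v y) :
    RingQuot s →ₐ[R] A :=
  liftAlgHom R ⟨FreeAlgebra.lift R v, h⟩

@[simp]
theorem liftFreeAlgebra_mkAlgHom_ι (v : X → A)
    (h : ∀ ⦃x y⦄, s x y → FreeAlgebra.lift R v x = FreeAlgebra.lift R v y) (i : X) :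
    liftFreeAlgebra v h (mkAlgHom R s (ι R i)) = v i := by
  simp [liftFreeAlgebra]

end RingQuot

section Identities

variable {K A : Type*} [CommSemiring K] [Semiring A] [Algebra K A]

theorem add_smul_mul_add_smul_of_mul_eq_zero {a b : A} (hab : a * b = 0) (hba : b * a = 0)
    (c d : K) : (a + c • b) * (a + d • b) = a * a + (c * d) • (b * b) := by
  simp only [add_mul, mul_add, smul_mul_assoc, mul_smul_comm, smul_smul, hab, hba, smul_zero,
    add_zero, zero_add, mul_comm d c]

theorem smul_add_smul_mul_smul_add_smul_of_mul_self_eq_zero {x y : A} (hx : x * x = 0)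
    (hy : y * y = 0) (hxy : x * y = y * x) (c d c' d' : K) :
    (c • x + d • y) * (c' • x + d' • y) = (c * d' + d * c') • (x * y) := by
  simp only [add_mul, mul_add, smul_mul_smul_comm, hx, hy, ← hxy, smul_zero, add_zero, add_smul,
    add_comm]

end Identities

section Presentations

variable (K : Type*) [Field K]

abbrev gammaGen (i : Fin 2) : RingQuot (gammaRel K) := RingQuot.mkAlgHom K (gammaRel K) (ι K i)

abbrev lambdaGen (i : Fin 2) : RingQuot (lambdaRel K) := RingQuot.mkAlgHom K (lambdaRel K) (ι K i)

theorem gammaGen_zero_mul_self : gammaGen K 0 * gammaGen K 0 = 0 := by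
  simpa using RingQuot.mkAlgHom_rel K (s := gammaRel K) (Or.inl ⟨rfl, rfl⟩)

theorem gammaGen_one_mul_self : gammaGen K 1 * gammaGen K 1 = 0 := by
  simpa using RingQuot.mkAlgHom_rel K (s := gammaRel K) (Or.inr (Or.inl ⟨rfl, rfl⟩))

theorem gammaGen_zero_mul_one : gammaGen K 0 * gammaGen K 1 = gammaGen K 1 * gammaGen K 0 := by
  simpa using RingQuot.mkAlgHom_rel K (s := gammaRel K) (Or.inr (Or.inr ⟨rfl, rfl⟩))

theorem lambdaGen_zero_mul_one : lambdaGen K 0 * lambdaGen K 1 = 0 := by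
  simpa using RingQuot.mkAlgHom_rel K (s := lambdaRel K) (Or.inl ⟨rfl, rfl⟩)

theorem lambdaGen_one_mul_zero : lambdaGen K 1 * lambdaGen K 0 = 0 := by
  simpa using RingQuot.mkAlgHom_rel K (s := lambdaRel K) (Or.inr (Or.inl ⟨rfl, rfl⟩))

theorem lambdaGen_zero_mul_self :
    lambdaGen K 0 * lambdaGen K 0 = lambdaGen K 1 * lambdaGen K 1 := by
  simpa using RingQuot.mkAlgHom_rel K (s := lambdaRel K) (Or.inr (Or.inr ⟨rfl, rfl⟩))

variable {K} {A : Type*} [Semiring A] [Algebra K A]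

theorem gamma_algHom_ext {f g : RingQuot (gammaRel K) →ₐ[K] A}
    (h₀ : f (gammaGen K 0) = g (gammaGen K 0)) (h₁ : f (gammaGen K 1) = g (gammaGen K 1)) :
    f = g :=
  RingQuot.algHom_ext_freeAlgebra (Fin.forall_fin_two.2 ⟨h₀, h₁⟩)

theorem lambda_algHom_ext {f g : RingQuot (lambdaRel K) →ₐ[K] A}
    (h₀ : f (lambdaGen K 0) = g (lambdaGen K 0)) (h₁ : f (lambdaGen K 1) = g (lambdaGen K 1)) :
    f = g :=
  RingQuot.algHom_ext_freeAlgebra (Fin.forall_fin_two.2 ⟨h₀, h₁⟩)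

def gammaLift (x y : A) (hx : x * x = 0) (hy : y * y = 0) (hxy : x * y = y * x) :
    RingQuot (gammaRel K) →ₐ[K] A :=
  RingQuot.liftFreeAlgebra ![x, y] <| by
    rintro _ _ (⟨rfl, rfl⟩ | ⟨rfl, rfl⟩ | ⟨rfl, rfl⟩) <;> simpa

def lambdaLift (a b : A) (hab : a * b = 0) (hba : b * a = 0) (haa : a * a = b * b) :
    RingQuot (lambdaRel K) →ₐ[K] A :=
  RingQuot.liftFreeAlgebra ![a, b] <| by
    rintro _ _ (⟨rfl, rfl⟩ | ⟨rfl, rfl⟩ | ⟨rfl, rfl⟩) <;> simpa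

variable (x y : A) (hx : x * x = 0) (hy : y * y = 0) (hxy : x * y = y * x)

@[simp]
theorem gammaLift_gammaGen_zero : gammaLift x y hx hy hxy (gammaGen K 0) = x :=
  RingQuot.liftFreeAlgebra_mkAlgHom_ι _ _ 0

@[simp]
theorem gammaLift_gammaGen_one : gammaLift x y hx hy hxy (gammaGen K 1) = y :=
  RingQuot.liftFreeAlgebra_mkAlgHom_ι _ _ 1

variable (a b : A) (hab : a * b = 0) (hba : b * a = 0) (haa : a * a = b * b)

@[simp]
theorem lambdaLift_lambdaGen_zero : lambdaLift a b hab hba haa (lambdaGen K 0) = a :=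
  RingQuot.liftFreeAlgebra_mkAlgHom_ι _ _ 0

@[simp]
theorem lambdaLift_lambdaGen_one : lambdaLift a b hab hba haa (lambdaGen K 1) = b :=
  RingQuot.liftFreeAlgebra_mkAlgHom_ι _ _ 1

end Presentations

section Isomorphism

variable {K : Type*} [Field K] {ε : K} (hε : ε * ε = -1)
include hε

def gammaToLambda : RingQuot (gammaRel K) →ₐ[K] RingQuot (lambdaRel K) :=
  have hprod (c d : K) := add_smul_mul_add_smul_of_mul_eq_zero (lambdaGen_zero_mul_one K)
    (lambdaGen_one_mul_zero K) c d
  gammaLift (lambdaGen K 0 + ε • lambdaGen K 1) (lambdaGen K 0 + (-ε) • lambdaGen K 1)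
    (by rw [hprod, lambdaGen_zero_mul_self, hε]; module)
    (by rw [hprod, lambdaGen_zero_mul_self, neg_mul_neg, hε]; module)
    (by rw [hprod, hprod, mul_comm])

def lambdaToGamma : RingQuot (lambdaRel K) →ₐ[K] RingQuot (gammaRel K) :=
  have hprod (c d c' d' : K) := smul_add_smul_mul_smul_add_smul_of_mul_self_eq_zero
    (gammaGen_zero_mul_self K) (gammaGen_one_mul_self K) (gammaGen_zero_mul_one K) c d c' d'
  lambdaLift ((2 : K)⁻¹ • gammaGen K 0 + (2 : K)⁻¹ • gammaGen K 1)
    ((2 * ε)⁻¹ • gammaGen K 0 + (-(2 * ε)⁻¹) • gammaGen K 1)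
    (by rw [hprod, mul_neg, neg_add_cancel, zero_smul])
    (by rw [hprod, neg_mul, add_neg_cancel, zero_smul])
    (by
      rw [hprod, hprod, neg_mul, mul_neg, ← mul_inv, ← mul_inv, mul_mul_mul_comm 2 ε, hε,
        mul_neg_one, inv_neg]
      module)

@[simp]
theorem gammaToLambda_gammaGen_zero :
    gammaToLambda hε (gammaGen K 0) = lambdaGen K 0 + ε • lambdaGen K 1 := by
  simp [gammaToLambda]

@[simp]
theorem gammaToLambda_gammaGen_one :
    gammaToLambda hε (gammaGen K 1) = lambdaGen K 0 - ε • lambdaGen K 1 := by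
  simp only [gammaToLambda, gammaLift_gammaGen_one]
  module

@[simp]
theorem lambdaToGamma_lambdaGen_zero :
    lambdaToGamma hε (lambdaGen K 0) = (2 : K)⁻¹ • gammaGen K 0 + (2 : K)⁻¹ • gammaGen K 1 := by
  simp [lambdaToGamma]

@[simp]
theorem lambdaToGamma_lambdaGen_one :
    lambdaToGamma hε (lambdaGen K 1) =
      (2 * ε)⁻¹ • gammaGen K 0 + (-(2 * ε)⁻¹) • gammaGen K 1 := by
  simp [lambdaToGamma]

variable (h2 : (2 : K) ≠ 0)
include h2

theorem gammaToLambda_comp_lambdaToGamma :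
    (gammaToLambda hε).comp (lambdaToGamma hε) = AlgHom.id K _ := by
  have hε0 : ε ≠ 0 := by rintro rfl; simp at hε
  refine lambda_algHom_ext ?_ ?_ <;>
    simp only [AlgHom.comp_apply, AlgHom.id_apply, map_add, map_smul,
      gammaToLambda_gammaGen_zero, gammaToLambda_gammaGen_one,
      lambdaToGamma_lambdaGen_zero, lambdaToGamma_lambdaGen_one] <;>
    match_scalars <;> field_simp <;> ring

theorem lambdaToGamma_comp_gammaToLambda :
    (lambdaToGamma hε).comp (gammaToLambda hε) = AlgHom.id K _ := by
  have hε0 : ε ≠ 0 := by rintro rfl; simp at hε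
  refine gamma_algHom_ext ?_ ?_ <;>
    simp only [AlgHom.comp_apply, AlgHom.id_apply, map_add, map_sub, map_smul,
      gammaToLambda_gammaGen_zero, gammaToLambda_gammaGen_one,
      lambdaToGamma_lambdaGen_zero, lambdaToGamma_lambdaGen_one] <;>
    match_scalars <;> field_simp <;> ring

end Isomorphism

theorem stmt11_general (K : Type*) [Field K] (hchar : ringChar K ≠ 2)
    (ε : K) (hε : ε ^ 2 = -1) :
    ∃ φ : RingQuot (gammaRel K) ≃ₐ[K] RingQuot (lambdaRel K),
      φ (RingQuot.mkAlgHom K (gammaRel K) (ι K 0)) =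
        RingQuot.mkAlgHom K (lambdaRel K) (ι K 0) +
          ε • RingQuot.mkAlgHom K (lambdaRel K) (ι K 1) ∧
      φ (RingQuot.mkAlgHom K (gammaRel K) (ι K 1)) =
        RingQuot.mkAlgHom K (lambdaRel K) (ι K 0) -
          ε • RingQuot.mkAlgHom K (lambdaRel K) (ι K 1) := by
  have hε' : ε * ε = -1 := by rw [← sq, hε]
  have h2 : (2 : K) ≠ 0 := Ring.two_ne_zero hchar
  refine ⟨.ofAlgHom (gammaToLambda hε') (lambdaToGamma hε')
    (gammaToLambda_comp_lambdaToGamma hε' h2) (lambdaToGamma_comp_gammaToLambda hε' h2), ?_, ?_⟩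
  · exact gammaToLambda_gammaGen_zero hε'
  · exact gammaToLambda_gammaGen_one hε'

/-- For `K` algebraically closed with `char K ≠ 2` and `ε² = -1`, the map
`α ↦ a + εb, β ↦ a - εb` extends to an algebra isomorphism
`K⟨α,β⟩/(α², β², αβ-βα) ≅ K⟨a,b⟩/(ab, ba, a²-b²)`. -/
theorem stmt11 (K : Type*) [Field K] [IsAlgClosed K] (hchar : ringChar K ≠ 2)
    (ε : K) (hε : ε ^ 2 = -1) :
    ∃ φ : RingQuot (gammaRel K) ≃ₐ[K] RingQuot (lambdaRel K),
      φ (RingQuot.mkAlgHom K (gammaRel K) (ι K 0)) =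
        RingQuot.mkAlgHom K (lambdaRel K) (ι K 0) +
          ε • RingQuot.mkAlgHom K (lambdaRel K) (ι K 1) ∧
      φ (RingQuot.mkAlgHom K (gammaRel K) (ι K 1)) =
        RingQuot.mkAlgHom K (lambdaRel K) (ι K 0) -
          ε • RingQuot.mkAlgHom K (lambdaRel K) (ι K 1) :=
  stmt11_general K hchar ε hε
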